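/- arXiv:2005.05161 — 3 statements merged into one kernel-verified Lean document; each statement's English description precedes it below -/
import Mathlib

section
/- Every graph automorphism of Γ₇ maps each of the vertex sets {a₁, b₁}, {a₂, b₂}, and {a₃, b₃} onto itself. -/
/-- The vertices of the graph `Γ₇`. -/
inductive V7 : Type
  | v | a1 | a2 | a3 | b1 | b2 | b3
  deriving DecidableEq

open V7

/-- The graph `Γ₇`: the hexagonal cycle `a₁a₂a₃b₁b₂b₃a₁`, the chords `a₂b₂` and `a₃b₃`,
and the four edges `va₁`, `vb₁`, `va₂`, `vb₂`. -/
def Gamma7 : SimpleGraph V7 :=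
  SimpleGraph.fromEdgeSet
    {s(a1, a2), s(a2, a3), s(a3, b1), s(b1, b2), s(b2, b3), s(b3, a1),
     s(a2, b2), s(a3, b3),
     s(v, a1), s(v, b1), s(v, a2), s(v, b2)}

/-!
The pairs are separated by colour refinement. The vertices of degree 4 are `v`, `a₂`, `b₂`;
exactly `a₃` and `b₃` have a single neighbour of degree 4; `v` is the only vertex with no
neighbour in `{a₃, b₃}`; and the neighbours of `v` split into `{a₂, b₂}` (degree 4) and
`{a₁, b₁}`. Each of these sets is defined by the graph structure alone, so every automorphism
maps it onto itself.
-/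

open Finset

namespace SimpleGraph

variable {V W : Type*} {G : SimpleGraph V} {H : SimpleGraph W}

theorem Iso.card_neighborFinset_inter [Fintype V] [Fintype W] [DecidableEq V] [DecidableEq W]
    [DecidableRel G.Adj] [DecidableRel H.Adj] (φ : G ≃g H) {S : Finset V} {T : Finset W}
    (hST : ∀ x, φ x ∈ T ↔ x ∈ S) (x : V) :
    #(H.neighborFinset (φ x) ∩ T) = #(G.neighborFinset x ∩ S) :=
  (card_equiv φ.toEquiv fun y => by simp [φ.map_adj_iff, hST]).symm

namespace Iso

def IsInvariant (φ : G ≃g G) (S : Finset V) : Prop := ∀ x, φ x ∈ S ↔ x ∈ S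

variable {φ : G ≃g G} {S T : Finset V}

theorem isInvariant_univ [Fintype V] (φ : G ≃g G) : φ.IsInvariant univ := by
  simp [IsInvariant]

theorem IsInvariant.inter [DecidableEq V] (hS : φ.IsInvariant S) (hT : φ.IsInvariant T) :
    φ.IsInvariant (S ∩ T) := fun x => by simp [hS x, hT x]

theorem IsInvariant.sdiff [DecidableEq V] (hS : φ.IsInvariant S) (hT : φ.IsInvariant T) :
    φ.IsInvariant (S \ T) := fun x => by simp [hS x, hT x]

theorem IsInvariant.of_card_neighborFinset_inter [Fintype V] [DecidableEq V]
    [DecidableRel G.Adj] (hS : φ.IsInvariant S) (k : ℕ)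
    (hT : ({x | #(G.neighborFinset x ∩ S) = k} : Finset V) = T) : φ.IsInvariant T :=
  fun x => by simp [← hT, φ.card_neighborFinset_inter hS]

theorem IsInvariant.image_eq (hS : φ.IsInvariant S) : φ '' S = S := by
  ext y
  refine ⟨?_, fun hy => ⟨φ.symm y, ?_, φ.apply_symm_apply y⟩⟩
  · rintro ⟨x, hx, rfl⟩
    exact (hS x).2 hx
  · simpa [← hS (φ.symm y)] using hy

end Iso

end SimpleGraph

instance : Fintype V7 := ⟨{v, a1, a2, a3, b1, b2, b3}, fun x => by cases x <;> simp⟩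

instance : DecidableRel Gamma7.Adj :=
  inferInstanceAs (DecidableRel (SimpleGraph.fromEdgeSet _).Adj)

/-- Every graph automorphism of `Γ₇` maps each of the vertex sets `{a₁, b₁}`, `{a₂, b₂}`,
and `{a₃, b₃}` onto itself. -/
theorem automorphism_of_Gamma7_preserves_pairs (φ : Gamma7 ≃g Gamma7) :
    ⇑φ '' ({a1, b1} : Set V7) = {a1, b1} ∧
    ⇑φ '' ({a2, b2} : Set V7) = {a2, b2} ∧
    ⇑φ '' ({a3, b3} : Set V7) = {a3, b3} := by
  have hdeg4 : φ.IsInvariant {v, a2, b2} :=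
    φ.isInvariant_univ.of_card_neighborFinset_inter 4 (by decide)
  have h3 : φ.IsInvariant {a3, b3} := hdeg4.of_card_neighborFinset_inter 1 (by decide)
  have hv : φ.IsInvariant {v} := h3.of_card_neighborFinset_inter 0 (by decide)
  have hNv : φ.IsInvariant {a1, b1, a2, b2} := hv.of_card_neighborFinset_inter 1 (by decide)
  have h1 : φ.IsInvariant {a1, b1} :=
    (by decide : ({a1, b1, a2, b2} \ {v, a2, b2} : Finset V7) = {a1, b1}) ▸ hNv.sdiff hdeg4
  have h2 : φ.IsInvariant {a2, b2} :=
    (by decide : ({a1, b1, a2, b2} ∩ {v, a2, b2} : Finset V7) = {a2, b2}) ▸ hNv.inter hdeg4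
  refine ⟨?_, ?_, ?_⟩
  · simpa only [coe_insert, coe_singleton] using h1.image_eq
  · simpa only [coe_insert, coe_singleton] using h2.image_eq
  · simpa only [coe_insert, coe_singleton] using h3.image_eq
end

section
/- Every graph automorphism of Γ₇ maps the edge set of the hexagonal cycle K = a₁a₂a₃b₁b₂b₃a₁ (namely {a₁a₂, a₂a₃, a₃b₁, b₁b₂, b₂b₃, b₃a₁}) onto itself. -/
open V7

/-- The edge set of the hexagonal cycle `K = a₁a₂a₃b₁b₂b₃a₁` in `Γ₇`. -/
def hexEdges7 : Set (Sym2 V7) :=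
  {s(a1, a2), s(a2, a3), s(a3, b1), s(b1, b2), s(b2, b3), s(b3, a1)}

/-!
The vertex `v` is the only vertex of `Γ₇` whose non-neighbours are pairwise adjacent (they are
`a₃` and `b₃`), so every automorphism fixes `v` and hence preserves both the degree of a vertex and
its adjacency to `v`. The hexagon edges are exactly the edges avoiding `v` whose endpoints are told
apart by these two invariants: the chords `a₂b₂` and `a₃b₃` are not.
-/

namespace SimpleGraph.Iso

variable {V W : Type*} {G : SimpleGraph V} {G' : SimpleGraph W}

theorem isClique_compl_neighborSet_iff (φ : G ≃g G') (x : V) :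
    G'.IsClique (G'ᶜ.neighborSet (φ x)) ↔ G.IsClique (Gᶜ.neighborSet x) := by
  simp only [IsClique, Set.Pairwise, mem_neighborSet, compl_adj]
  rw [φ.surjective.forall]
  refine forall_congr' fun y => ?_
  rw [φ.surjective.forall]
  simp only [φ.map_adj_iff, φ.injective.ne_iff]

theorem adj_apply_iff_of_apply_eq (φ : G ≃g G) {c : V} (hc : φ c = c) (x : V) :
    G.Adj c (φ x) ↔ G.Adj c x := by
  simpa only [hc] using φ.map_adj_iff (v := c) (w := x)

end SimpleGraph.Iso

open SimpleGraph

instance inst_s2 : Fintype V7 := ⟨{v, a1, a2, a3, b1, b2, b3}, by intro x; cases x <;> simp⟩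

instance inst_s2_2 : DecidableRel Gamma7.Adj := by unfold Gamma7; infer_instance

theorem gamma7_isClique_compl_neighborSet_iff (x : V7) :
    Gamma7.IsClique (Gamma7ᶜ.neighborSet x) ↔ x = v := by
  simp only [IsClique, Set.Pairwise, mem_neighborSet, compl_adj]
  revert x
  decide

theorem mem_hexEdges7_iff (u w : V7) :
    s(u, w) ∈ hexEdges7 ↔ Gamma7.Adj u w ∧ u ≠ v ∧ w ≠ v ∧
      ((Gamma7.Adj v u ↔ Gamma7.Adj v w) → Gamma7.degree u ≠ Gamma7.degree w) := by
  unfold hexEdges7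
  revert u w
  decide

/-- Every graph automorphism of `Γ₇` maps the edge set of the hexagonal cycle
`K = a₁a₂a₃b₁b₂b₃a₁` onto itself: `{φ(u), φ(w)} ∈ K` for every edge `{u, w}` of `K`. -/
theorem automorphism_of_Gamma7_preserves_hexagon (φ : Gamma7 ≃g Gamma7) :
    ∀ u w : V7, s(u, w) ∈ hexEdges7 → s(φ u, φ w) ∈ hexEdges7 := by
  have hv : φ v = v := by
    rw [← gamma7_isClique_compl_neighborSet_iff, φ.isClique_compl_neighborSet_iff,
      gamma7_isClique_compl_neighborSet_iff]
  have hfix (x : V7) : φ x = v ↔ x = v := φ.injective.eq_iff' hv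
  intro u w huw
  simpa only [mem_hexEdges7_iff, φ.map_adj_iff, φ.degree_eq, ne_eq, hfix,
    φ.adj_apply_iff_of_apply_eq hv] using huw
end

section
/- If G is a connected simple graph that has K₅ as a minor, then ‖G‖ − |G| ≥ 5. -/
/-! Delete from `G` every edge running between two different branch sets. Each branch set stays
connected, and every vertex is still joined to some branch set (follow a path of `G` until it
first enters one), so what is left has at most `|H|` components and hence at least `|G| - |H|`
edges. Every edge of `H` is witnessed by a deleted edge, and different edges of `H` by different
ones, so `‖G‖ ≥ |G| - |H| + ‖H‖`; for `K₅` this is `|G| + 5`. -/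

/-- `H` is a minor of `G`: `H` can be obtained from a subgraph of `G` by contracting edges.
Equivalently (branch-set formulation): there is a family of nonempty, pairwise disjoint,
connected subsets of the vertices of `G`, indexed by the vertices of `H`, such that whenever
two vertices are adjacent in `H` there is an edge of `G` between the corresponding sets. -/
def IsMinor {W V : Type} (H : SimpleGraph W) (G : SimpleGraph V) : Prop :=
  ∃ B : W → Set V,
    (∀ w, (B w).Nonempty) ∧
    (∀ w, (G.induce (B w)).Connected) ∧
    (∀ w₁ w₂, w₁ ≠ w₂ → Disjoint (B w₁) (B w₂)) ∧
    (∀ w₁ w₂, H.Adj w₁ w₂ → ∃ u ∈ B w₁, ∃ x ∈ B w₂, G.Adj u x)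

/-- The complete bipartite graph `K₃,₃`. -/
def K33 : SimpleGraph (Fin 3 ⊕ Fin 3) := completeBipartiteGraph (Fin 3) (Fin 3)

/-- The complete graph `K₅`. -/
def K5 : SimpleGraph (Fin 5) := ⊤

open Function SimpleGraph

theorem Pairwise.eq_of_mem_of_mem {V W : Type*} {B : W → Set V} (hB : Pairwise (Disjoint on B))
    {i j : W} {v : V} (hi : v ∈ B i) (hj : v ∈ B j) : i = j :=
  hB.eq (Set.not_disjoint_iff.2 ⟨v, hi, hj⟩)

namespace SimpleGraph

variable {V W : Type*}

lemma card_le_ncard_edgeSet_add_card_connectedComponent [Finite V] (G : SimpleGraph V) :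
    Nat.card V ≤ G.edgeSet.ncard + Nat.card G.ConnectedComponent := by
  rcases isEmpty_or_nonempty V with _ | ⟨⟨v⟩⟩
  · simp
  -- Joining one representative `r` to a representative of every component connects `G`, and
  -- costs one edge fewer than there are components, since the star edge at `r` itself is a loop.
  set r : V := (G.connectedComponentMk v).out
  let star : Set (Sym2 V) := (fun c : G.ConnectedComponent => s(r, c.out)) '' Set.univ
  have hconn : (G ⊔ fromEdgeSet star).Connected := by
    refine (connected_iff_exists_forall_reachable _).2 ⟨r, fun w => ?_⟩
    have hw : G.Reachable (G.connectedComponentMk w).out w :=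
      ConnectedComponent.exact (G.connectedComponentMk w).out_eq
    refine .trans ?_ (hw.mono le_sup_left)
    by_cases h : r = (G.connectedComponentMk w).out
    · rw [h]
    · exact Adj.reachable (Or.inr ⟨⟨_, trivial, rfl⟩, h⟩)
  have hstar : (fromEdgeSet star).edgeSet.ncard + 1 ≤ Nat.card G.ConnectedComponent :=
    calc (fromEdgeSet star).edgeSet.ncard + 1 ≤ (star \ {s(r, r)}).ncard + 1 := by
          rw [edgeSet_fromEdgeSet]
          gcongr
          · exact Set.toFinite _
          · simp
      _ = star.ncard := Set.ncard_sdiff_singleton_add_one ⟨_, trivial, rfl⟩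
      _ ≤ (Set.univ : Set G.ConnectedComponent).ncard := Set.ncard_image_le
      _ = Nat.card G.ConnectedComponent := Set.ncard_univ _
  have hcard := hconn.card_vert_le_card_edgeSet_add_one
  rw [edgeSet_sup, Nat.card_coe_set_eq] at hcard
  have := Set.ncard_union_le G.edgeSet (fromEdgeSet star).edgeSet
  omega

lemma Walk.exists_mem_reachable {G G' : SimpleGraph V} {U : Set V} {u v : V} (p : G.Walk v u)
    (hu : u ∈ U) (hG' : ∀ ⦃x y⦄, x ∉ U → G.Adj x y → G'.Adj x y) :
    ∃ x ∈ U, G'.Reachable v x := by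
  induction p with
  | nil => exact ⟨_, hu, .rfl⟩
  | @cons v _ _ h _ ih =>
    by_cases hv : v ∈ U
    · exact ⟨v, hv, .rfl⟩
    · obtain ⟨x, hx, hwx⟩ := ih hu
      exact ⟨x, hx, (hG' hv h).reachable.trans hwx⟩

def crossEdges (G : SimpleGraph V) (B : W → Set V) : Set (Sym2 V) :=
  {e ∈ G.edgeSet | ∃ i j, i ≠ j ∧ ∃ u ∈ B i, ∃ x ∈ B j, e = s(u, x)}

variable {G : SimpleGraph V} {B : W → Set V}

lemma crossEdges_subset_edgeSet : crossEdges G B ⊆ G.edgeSet := fun _ he => he.1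

lemma mk_notMem_crossEdges_of_notMem_iUnion {u x : V} (hu : u ∉ ⋃ i, B i) :
    s(u, x) ∉ crossEdges G B := by
  rintro ⟨-, i, j, -, a, ha, b, hb, hab⟩
  rcases Sym2.eq_iff.1 hab with ⟨rfl, -⟩ | ⟨rfl, -⟩
  · exact hu (Set.mem_iUnion_of_mem i ha)
  · exact hu (Set.mem_iUnion_of_mem j hb)

lemma mk_notMem_crossEdges_of_mem (hB : Pairwise (Disjoint on B)) {w : W} {u x : V}
    (hu : u ∈ B w) (hx : x ∈ B w) : s(u, x) ∉ crossEdges G B := by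
  rintro ⟨-, i, j, hij, a, ha, b, hb, hab⟩
  rcases Sym2.eq_iff.1 hab with ⟨rfl, rfl⟩ | ⟨rfl, rfl⟩
  · exact hij ((hB.eq_of_mem_of_mem ha hu).trans (hB.eq_of_mem_of_mem hb hx).symm)
  · exact hij ((hB.eq_of_mem_of_mem ha hx).trans (hB.eq_of_mem_of_mem hb hu).symm)

lemma ncard_edgeSet_le_ncard_crossEdges [Finite V] [Nonempty W] {H : SimpleGraph W}
    (hB : Pairwise (Disjoint on B))
    (hadj : ∀ i j, H.Adj i j → ∃ u ∈ B i, ∃ x ∈ B j, G.Adj u x) :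
    H.edgeSet.ncard ≤ (crossEdges G B).ncard := by
  let idx : V → W := fun v => Classical.epsilon fun w => v ∈ B w
  have hidx : ∀ {i v}, v ∈ B i → idx v = i := fun hv =>
    hB.eq_of_mem_of_mem (Classical.epsilon_spec (p := fun w => _ ∈ B w) ⟨_, hv⟩) hv
  have hcover : H.edgeSet ⊆ Sym2.map idx '' crossEdges G B := by
    intro e he
    induction e using Sym2.ind with
    | _ i j =>
      obtain ⟨u, hu, x, hx, hux⟩ := hadj i j he
      exact ⟨s(u, x), ⟨hux, i, j, he.ne, u, hu, x, hx, rfl⟩, by simp [hidx hu, hidx hx]⟩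
  exact (Set.ncard_le_ncard hcover (Set.toFinite _)).trans Set.ncard_image_le

lemma card_connectedComponent_deleteEdges_crossEdges_le [Finite W] [Nonempty W]
    (hG : G.Connected) (hne : ∀ w, (B w).Nonempty) (hconn : ∀ w, (G.induce (B w)).Connected)
    (hB : Pairwise (Disjoint on B)) :
    Nat.card (G.deleteEdges (crossEdges G B)).ConnectedComponent ≤ Nat.card W := by
  set G' := G.deleteEdges (crossEdges G B)
  choose r hr using hne
  have hinside : ∀ w, ∀ x ∈ B w, G'.Reachable x (r w) := by
    intro w x hx
    let f : G.induce (B w) →g G' := ⟨Subtype.val, fun {a b} h =>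
      deleteEdges_adj.2 ⟨h, mk_notMem_crossEdges_of_mem hB a.2 b.2⟩⟩
    exact ((hconn w).preconnected ⟨x, hx⟩ ⟨r w, hr w⟩).map f
  refine Nat.card_le_card_of_surjective (fun w => G'.connectedComponentMk (r w)) ?_
  rintro ⟨v⟩
  obtain ⟨w₀⟩ := ‹Nonempty W›
  obtain ⟨x, hx, hvx⟩ := (hG.preconnected v (r w₀)).some.exists_mem_reachable
    (Set.mem_iUnion_of_mem w₀ (hr w₀))
    fun a b ha h => deleteEdges_adj.2 ⟨h, mk_notMem_crossEdges_of_notMem_iUnion ha⟩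
  obtain ⟨w, hxw⟩ := Set.mem_iUnion.1 hx
  exact ⟨w, ConnectedComponent.sound (hvx.trans (hinside w x hxw)).symm⟩

end SimpleGraph

theorem IsMinor.card_add_ncard_edgeSet_le_ncard_edgeSet_add_card {V W : Type} [Finite V]
    [Finite W] [Nonempty W] {H : SimpleGraph W} {G : SimpleGraph V} (hG : G.Connected)
    (h : IsMinor H G) : Nat.card V + H.edgeSet.ncard ≤ G.edgeSet.ncard + Nat.card W := by
  obtain ⟨B, hne, hconn, hB, hadj⟩ := h
  have hcomp := card_connectedComponent_deleteEdges_crossEdges_le hG hne hconn hB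
  have hV := card_le_ncard_edgeSet_add_card_connectedComponent (G.deleteEdges (crossEdges G B))
  have hsplit := Set.ncard_sdiff_add_ncard_of_subset (crossEdges_subset_edgeSet (G := G) (B := B))
  have hH := ncard_edgeSet_le_ncard_crossEdges (H := H) hB hadj
  rw [edgeSet_deleteEdges] at hV
  omega

lemma ncard_edgeSet_K5 : K5.edgeSet.ncard = 10 := by
  rw [K5, ← coe_edgeFinset, Set.ncard_coe_finset, card_edgeFinset_top_eq_card_choose_two]
  rfl

/-- If `G` is a connected finite simple graph that has `K₅` as a minor, then
`‖G‖ − |G| ≥ 5`, i.e. the number of edges of `G` is at least the number of vertices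
plus 5. -/
theorem edges_sub_vertices_ge_five_of_K5_minor
    {V : Type} [Fintype V] (G : SimpleGraph V)
    (hconn : G.Connected) (hminor : IsMinor K5 G) :
    Fintype.card V + 5 ≤ G.edgeSet.ncard := by
  have := hminor.card_add_ncard_edgeSet_le_ncard_edgeSet_add_card hconn
  simp only [ncard_edgeSet_K5, Nat.card_eq_fintype_card, Fintype.card_fin] at this
  omega
end
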